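/- With α, β, γ as in the extremal construction, if at least one of α, β, γ is nonzero, then the extremal Jordan derivation Ω of R_n(K,J) is not a derivation of R_n(K,J). -/

import Mathlib

/-!
A derivation vanishes at `0`, and reading off three entries of `Ω 0 = 0` gives
`α 0 = β 0 = γ 0 = 0`. For single-entry matrices `a = x e_{ik}` and `b = x' e_{k'l}`, the
Leibniz terms `Ω(a) b` and `a Ω(b)` vanish outside column `l` and outside row `i` respectively,
so `Ω(ab)` vanishes at every position `(r, s)` with `r ≠ i`, `s ≠ l`. For `y ∈ J`, applied to
`(y e_{1n}) e_{n,n-1} = y e_{1,n-1}` at `(n, 1)` and `(n, 2)` this gives `α y = β y = 0`, and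
applied to `e_{21} (y e_{1n}) = y e_{2n}` at `(n, 1)` it gives `γ y = 0`.
-/

open Matrix

/-- `R_n(K,J)`: the non-unital subring of `n × n` matrices over `K` whose entries on and
above the main diagonal lie in the two-sided ideal `J`. -/
def Rset (n : ℕ) (K : Type) [Ring K] (J : TwoSidedIdeal K) :
    NonUnitalSubring (Matrix (Fin n) (Fin n) K) where
  carrier := {M | ∀ i j : Fin n, i ≤ j → M i j ∈ J}
  zero_mem' := by intro i j _; simp [J.zero_mem]
  add_mem' := by intro a b ha hb i j h; exact J.add_mem (ha i j h) (hb i j h)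
  neg_mem' := by intro a ha i j h; exact J.neg_mem (ha i j h)
  mul_mem' := by
    intro a b ha hb i j h
    show (∑ k, a i k * b k j) ∈ J
    refine J.finsetSum_mem _ _ fun k _ => ?_
    rcases le_or_gt i k with hik | hik
    · exact J.mul_mem_right _ _ (ha i k hik)
    · exact J.mul_mem_left _ _ (hb k j (le_trans hik.le h))

lemma stdBasis_mem {n : ℕ} {K : Type} [Ring K] {J : TwoSidedIdeal K}
    {i j : Fin n} {y : K} (h : i ≤ j → y ∈ J) :
    Matrix.single i j y ∈ Rset n K J := by
  intro a b hab
  rw [Matrix.single]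
  by_cases hc : i = a ∧ j = b
  · obtain ⟨rfl, rfl⟩ := hc
    simpa using h hab
  · simp [Matrix.of_apply, if_neg hc, J.zero_mem]

lemma map_zero_of_leibniz {R : Type*} [NonUnitalNonAssocSemiring R] {D : R → R}
    (hD : ∀ a b, D (a * b) = D a * b + a * D b) : D 0 = 0 := by
  simpa using hD 0 0

lemma leibniz_mul_single_apply_eq_zero {m K : Type*} [Fintype m] [DecidableEq m] [Ring K]
    {S : NonUnitalSubring (Matrix m m K)} {D : S → S}
    (hD : ∀ a b, D (a * b) = D a * b + a * D b) {a b : S} {i k k' l r s : m} {x y : K}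
    (ha : (a : Matrix m m K) = single i k x) (hb : (b : Matrix m m K) = single k' l y)
    (hr : r ≠ i) (hs : s ≠ l) : (D (a * b) : Matrix m m K) r s = 0 := by
  rw [hD, AddMemClass.coe_add, MulMemClass.coe_mul, MulMemClass.coe_mul, ha, hb]
  simp [hr, hs]

section Extremal

variable {n : ℕ} {K : Type} [Ring K]

/-- The extremal Jordan derivation `Ω` on all of `Matrix (Fin n) (Fin n) K`; `Fin n` counts
from `0`, so the paper's index `k` is `k - 1` here. -/
def extremal (hn : 2 ≤ n) (α β γ : K → K) (M : Matrix (Fin n) (Fin n) K) :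
    Matrix (Fin n) (Fin n) K :=
  single ⟨n - 2, by omega⟩ ⟨0, by omega⟩ (α (M ⟨0, by omega⟩ ⟨n - 1, by omega⟩)) +
  single ⟨n - 2, by omega⟩ ⟨1, by omega⟩ (β (M ⟨0, by omega⟩ ⟨n - 1, by omega⟩)) +
  single ⟨n - 1, by omega⟩ ⟨1, by omega⟩ (γ (M ⟨0, by omega⟩ ⟨n - 1, by omega⟩)) +
  single ⟨n - 1, by omega⟩ ⟨0, by omega⟩ (α (M ⟨0, by omega⟩ ⟨n - 2, by omega⟩)) +
  single ⟨n - 1, by omega⟩ ⟨1, by omega⟩ (β (M ⟨0, by omega⟩ ⟨n - 2, by omega⟩)) +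
  single ⟨n - 1, by omega⟩ ⟨0, by omega⟩ (β (M ⟨1, by omega⟩ ⟨n - 2, by omega⟩)) +
  single ⟨n - 2, by omega⟩ ⟨0, by omega⟩ (β (M ⟨1, by omega⟩ ⟨n - 1, by omega⟩)) +
  single ⟨n - 1, by omega⟩ ⟨0, by omega⟩ (γ (M ⟨1, by omega⟩ ⟨n - 1, by omega⟩))

variable (hn : 2 ≤ n) (α β γ : K → K) (M : Matrix (Fin n) (Fin n) K)

lemma extremal_apply_penult_one :
    extremal hn α β γ M ⟨n - 2, by omega⟩ ⟨1, by omega⟩ =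
      β (M ⟨0, by omega⟩ ⟨n - 1, by omega⟩) := by
  simp [extremal, Fin.ext_iff, show n - 1 ≠ n - 2 by omega]

lemma extremal_apply_last_zero :
    extremal hn α β γ M ⟨n - 1, by omega⟩ ⟨0, by omega⟩ =
      α (M ⟨0, by omega⟩ ⟨n - 2, by omega⟩) + β (M ⟨1, by omega⟩ ⟨n - 2, by omega⟩) +
        γ (M ⟨1, by omega⟩ ⟨n - 1, by omega⟩) := by
  simp [extremal, Fin.ext_iff, show n - 2 ≠ n - 1 by omega]

lemma extremal_apply_last_one :
    extremal hn α β γ M ⟨n - 1, by omega⟩ ⟨1, by omega⟩ =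
      γ (M ⟨0, by omega⟩ ⟨n - 1, by omega⟩) + β (M ⟨0, by omega⟩ ⟨n - 2, by omega⟩) := by
  simp [extremal, Fin.ext_iff, show n - 2 ≠ n - 1 by omega]

end Extremal

section Leibniz

variable {n : ℕ} {K : Type} [Ring K] {J : TwoSidedIdeal K} (h2 : 2 ≤ n) {α β γ : K → K}
  {Ω : Rset n K J → Rset n K J}
  (hΩ : ∀ M, (Ω M : Matrix (Fin n) (Fin n) K) = extremal h2 α β γ M)
  (hmul : ∀ a b, Ω (a * b) = Ω a * b + a * Ω b)
include hΩ hmul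

lemma map_zero_of_extremal_leibniz : α 0 = 0 ∧ β 0 = 0 ∧ γ 0 = 0 := by
  have h0 : extremal h2 α β γ 0 = 0 := by
    rw [← ZeroMemClass.coe_zero (Rset n K J), ← hΩ, map_zero_of_leibniz hmul]
  have hβ : β 0 = 0 := by
    simpa [extremal_apply_penult_one] using congrFun₂ h0 ⟨n - 2, by omega⟩ ⟨1, by omega⟩
  have hγ : γ 0 = 0 := by
    simpa [extremal_apply_last_one, hβ] using congrFun₂ h0 ⟨n - 1, by omega⟩ ⟨1, by omega⟩
  have hα : α 0 = 0 := by
    simpa [extremal_apply_last_zero, hβ, hγ] using congrFun₂ h0 ⟨n - 1, by omega⟩ ⟨0, by omega⟩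
  exact ⟨hα, hβ, hγ⟩

lemma alpha_beta_eq_zero_of_extremal_leibniz (hn : 4 ≤ n) {y : K} (hy : y ∈ J) : α y = 0 ∧ β y = 0 := by
  obtain ⟨hα0, hβ0, hγ0⟩ := map_zero_of_extremal_leibniz h2 hΩ hmul
  let a : Rset n K J := ⟨single ⟨0, by omega⟩ ⟨n - 1, by omega⟩ y, stdBasis_mem fun _ => hy⟩
  let b : Rset n K J := ⟨single ⟨n - 1, by omega⟩ ⟨n - 2, by omega⟩ 1,
    stdBasis_mem fun h => absurd (Fin.le_def.mp h) (by simp only; omega)⟩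
  have hab : ((a * b : Rset n K J) : Matrix (Fin n) (Fin n) K) =
      single ⟨0, by omega⟩ ⟨n - 2, by omega⟩ y := by
    simp [a, b]
  have hq : (⟨n - 1, by omega⟩ : Fin n) ≠ ⟨0, by omega⟩ := by simp [Fin.ext_iff]; omega
  have h0 := leibniz_mul_single_apply_eq_zero hmul (a := a) (b := b) rfl rfl hq
    (s := ⟨0, by omega⟩) (by simp [Fin.ext_iff]; omega)
  have h1 := leibniz_mul_single_apply_eq_zero hmul (a := a) (b := b) rfl rfl hq
    (s := ⟨1, by omega⟩) (by simp [Fin.ext_iff]; omega)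
  rw [hΩ, hab, extremal_apply_last_zero] at h0
  rw [hΩ, hab, extremal_apply_last_one] at h1
  simp [Fin.ext_iff, show n - 2 ≠ n - 1 by omega, hβ0, hγ0] at h0 h1
  exact ⟨h0, h1⟩

lemma gamma_eq_zero_of_extremal_leibniz (hn : 4 ≤ n) {y : K} (hy : y ∈ J) : γ y = 0 := by
  obtain ⟨hα0, hβ0, -⟩ := map_zero_of_extremal_leibniz h2 hΩ hmul
  let c : Rset n K J := ⟨single ⟨1, by omega⟩ ⟨0, by omega⟩ 1,
    stdBasis_mem fun h => absurd (Fin.le_def.mp h) (by simp only; omega)⟩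
  let a : Rset n K J := ⟨single ⟨0, by omega⟩ ⟨n - 1, by omega⟩ y, stdBasis_mem fun _ => hy⟩
  have hca : ((c * a : Rset n K J) : Matrix (Fin n) (Fin n) K) =
      single ⟨1, by omega⟩ ⟨n - 1, by omega⟩ y := by
    simp [c, a]
  have h := leibniz_mul_single_apply_eq_zero hmul (a := c) (b := a) rfl rfl
    (r := ⟨n - 1, by omega⟩) (s := ⟨0, by omega⟩) (by simp [Fin.ext_iff]; omega)
    (by simp [Fin.ext_iff]; omega)
  rw [hΩ, hca, extremal_apply_last_zero] at h
  simpa [Fin.ext_iff, show n - 1 ≠ n - 2 by omega, hα0, hβ0] using h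

end Leibniz

/-- if at least one of `α, β, γ` is nonzero on `J`, the extremal Jordan
derivation `Ω` is not a derivation of `R_n(K,J)`. -/
theorem extremal_not_derivation (n : ℕ) (hn : 4 ≤ n) (K : Type) [Ring K]
    (J : TwoSidedIdeal K) (α β γ : K → K)
    (hne : (∃ y ∈ J, α y ≠ 0) ∨ (∃ y ∈ J, β y ≠ 0) ∨ (∃ y ∈ J, γ y ≠ 0)) :
    ∀ Ω : ↥(Rset n K J) → ↥(Rset n K J),
      (∀ M : ↥(Rset n K J),
        (↑(Ω M) : Matrix (Fin n) (Fin n) K) =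
          Matrix.single ⟨n - 2, by omega⟩ ⟨0, by omega⟩
            (α ((M : Matrix (Fin n) (Fin n) K) ⟨0, by omega⟩ ⟨n - 1, by omega⟩)) +
          Matrix.single ⟨n - 2, by omega⟩ ⟨1, by omega⟩
            (β ((M : Matrix (Fin n) (Fin n) K) ⟨0, by omega⟩ ⟨n - 1, by omega⟩)) +
          Matrix.single ⟨n - 1, by omega⟩ ⟨1, by omega⟩
            (γ ((M : Matrix (Fin n) (Fin n) K) ⟨0, by omega⟩ ⟨n - 1, by omega⟩)) +
          Matrix.single ⟨n - 1, by omega⟩ ⟨0, by omega⟩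
            (α ((M : Matrix (Fin n) (Fin n) K) ⟨0, by omega⟩ ⟨n - 2, by omega⟩)) +
          Matrix.single ⟨n - 1, by omega⟩ ⟨1, by omega⟩
            (β ((M : Matrix (Fin n) (Fin n) K) ⟨0, by omega⟩ ⟨n - 2, by omega⟩)) +
          Matrix.single ⟨n - 1, by omega⟩ ⟨0, by omega⟩
            (β ((M : Matrix (Fin n) (Fin n) K) ⟨1, by omega⟩ ⟨n - 2, by omega⟩)) +
          Matrix.single ⟨n - 2, by omega⟩ ⟨0, by omega⟩
            (β ((M : Matrix (Fin n) (Fin n) K) ⟨1, by omega⟩ ⟨n - 1, by omega⟩)) +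
          Matrix.single ⟨n - 1, by omega⟩ ⟨0, by omega⟩
            (γ ((M : Matrix (Fin n) (Fin n) K) ⟨1, by omega⟩ ⟨n - 1, by omega⟩))) →
      ¬ ((∀ a b : ↥(Rset n K J), Ω (a + b) = Ω a + Ω b) ∧
         (∀ a b : ↥(Rset n K J), Ω (a * b) = Ω a * b + a * Ω b)) := by
  rintro Ω hΩ ⟨-, hmul⟩
  have h2 : 2 ≤ n := by omega
  rcases hne with ⟨y, hy, hy0⟩ | ⟨y, hy, hy0⟩ | ⟨y, hy, hy0⟩
  · exact hy0 (alpha_beta_eq_zero_of_extremal_leibniz h2 hΩ hmul hn hy).1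
  · exact hy0 (alpha_beta_eq_zero_of_extremal_leibniz h2 hΩ hmul hn hy).2
  · exact hy0 (gamma_eq_zero_of_extremal_leibniz h2 hΩ hmul hn hy)
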